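/- arXiv:math/0201125 — 4 statements merged into one kernel-verified Lean document; each statement's English description precedes it below -/
import Mathlib

section
/- Let k be a field and A = k[t]/(t³). An A-module M is flat if and only if both the map tM/t²M → t²M induced by multiplication by t and the map M/tM → t²M induced by multiplication by t² are isomorphisms, if and only if M is a free A-module. -/
/-!
Tensoring the exact sequences `A --t--> A --t²--> A` and `A --t²--> A --t--> A` with a flat `M`
keeps them exact, which is exactly the injectivity of the two maps (both are always surjective).
Conversely, injectivity of both maps gives `ker t = t²M`. Lift a `k`-basis of `M/tM` to a family
`m` in `M` and let `φ : (ι →₀ A) → M` be the induced map. As `t` is nilpotent, `φ` is onto by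
Nakayama. If `φ g = 0` then `g = t h`, as `A/tA = k` and the basis is independent mod `t`;
so `φ h ∈ ker t = t²M`, say `φ h = φ (t² z)`, and `g = t (h - t² z)` with `h - t² z ∈ ker φ`.
Thus `ker φ ⊆ t ker φ ⊆ t³ ker φ = 0`.
-/

open Polynomial

set_option maxHeartbeats 1000000
set_option synthInstance.maxHeartbeats 1000000

noncomputable section

/-- The ring `A = k[t]/(t³)`. -/
abbrev A3 (k : Type*) [Field k] : Type _ :=
  Polynomial k ⧸ Ideal.span {(X : Polynomial k) ^ 3}

/-- The class of `t` in `k[t]/(t³)`. -/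
noncomputable def tA3 (k : Type*) [Field k] : A3 k :=
  Ideal.Quotient.mk _ (X : Polynomial k)

lemma tA3_cube (k : Type*) [Field k] : (tA3 k) ^ 3 = 0 := by
  have h : (tA3 k) ^ 3 =
      Ideal.Quotient.mk (Ideal.span {(X : Polynomial k) ^ 3}) ((X : Polynomial k) ^ 3) := by
    simp [tA3, map_pow]
  rw [h, Ideal.Quotient.eq_zero_iff_mem]
  exact Ideal.subset_span rfl

variable (k : Type*) [Field k] (M : Type*) [AddCommGroup M] [Module (A3 k) M]

/-- The submodule `tM ⊆ M`. -/
def tSub : Submodule (A3 k) M := LinearMap.range (LinearMap.lsmul (A3 k) M (tA3 k))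

/-- The submodule `t²M ⊆ M`. -/
def t2Sub : Submodule (A3 k) M := LinearMap.range (LinearMap.lsmul (A3 k) M (tA3 k ^ 2))

/-- The map `tM/t²M → t²M` induced by multiplication by `t`. -/
def mulTmap : (tSub k M ⧸ (t2Sub k M).comap (tSub k M).subtype) →ₗ[A3 k] t2Sub k M :=
  Submodule.liftQ ((t2Sub k M).comap (tSub k M).subtype)
    (LinearMap.codRestrict (t2Sub k M)
      ((LinearMap.lsmul (A3 k) M (tA3 k)).comp (tSub k M).subtype)
      (by
        rintro ⟨x, hx⟩
        obtain ⟨y, rfl⟩ := LinearMap.mem_range.mp hx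
        exact ⟨y, by simp [smul_smul, sq]⟩))
    (by
      rintro ⟨x, hx⟩ h
      rw [Submodule.mem_comap] at h
      obtain ⟨y, rfl⟩ := LinearMap.mem_range.mp h
      rw [LinearMap.mem_ker]
      apply Subtype.ext
      have h3 : tA3 k * tA3 k ^ 2 = 0 := by
        rw [← pow_succ']
        exact tA3_cube k
      simp only [LinearMap.codRestrict_apply, LinearMap.comp_apply, Submodule.coe_subtype,
        LinearMap.lsmul_apply, smul_smul, h3, Submodule.coe_zero]
      exact zero_smul (A3 k) y)

/-- The map `M/tM → t²M` induced by multiplication by `t²`. -/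
def mulT2map : (M ⧸ tSub k M) →ₗ[A3 k] t2Sub k M :=
  Submodule.liftQ (tSub k M)
    (LinearMap.codRestrict (t2Sub k M) (LinearMap.lsmul (A3 k) M (tA3 k ^ 2))
      (fun m => LinearMap.mem_range_self _ m))
    (by
      intro x hx
      obtain ⟨y, rfl⟩ := LinearMap.mem_range.mp hx
      rw [LinearMap.mem_ker]
      apply Subtype.ext
      have h3 : tA3 k ^ 2 * tA3 k = 0 := by
        rw [← pow_succ]
        exact tA3_cube k
      simp only [LinearMap.codRestrict_apply, LinearMap.comp_apply, Submodule.coe_subtype,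
        LinearMap.lsmul_apply, smul_smul, h3, Submodule.coe_zero]
      show (tA3 k ^ 2) • (tA3 k • y) = 0
      rw [smul_smul, h3]
      exact zero_smul (A3 k) y)

section

variable {R N : Type*}

theorem Submodule.eq_bot_of_forall_eq_smul_of_isNilpotent [Semiring R] [AddCommMonoid N]
    [Module R N] {r : R} (hr : IsNilpotent r) {K : Submodule R N}
    (hK : ∀ x ∈ K, ∃ y ∈ K, x = r • y) : K = ⊥ := by
  have key : ∀ n : ℕ, ∀ x ∈ K, ∃ y ∈ K, x = r ^ n • y := by
    intro n
    induction n with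
    | zero => exact fun x hx => ⟨x, hx, by rw [pow_zero, one_smul]⟩
    | succ n ih =>
      intro x hx
      obtain ⟨y, hy, rfl⟩ := ih x hx
      obtain ⟨z, hz, rfl⟩ := hK y hy
      exact ⟨z, hz, by rw [smul_smul, ← pow_succ]⟩
  obtain ⟨n, hn⟩ := hr
  refine eq_bot_iff.mpr fun x hx => ?_
  obtain ⟨y, -, rfl⟩ := key n x hx
  rw [hn, zero_smul]
  exact zero_mem _

theorem LinearMap.surjective_of_surjective_mkQ_comp_of_isNilpotent {P : Type*} [CommRing R]
    [AddCommGroup N] [Module R N] [AddCommGroup P] [Module R P] {r : R} (hr : IsNilpotent r)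
    (f : P →ₗ[R] N) (hf : Function.Surjective ((range (lsmul R N r)).mkQ ∘ₗ f)) :
    Function.Surjective f := by
  have key : ∀ n : ℕ, ∀ x : N, ∃ p y, x = f p + r ^ n • y := by
    intro n
    induction n with
    | zero => exact fun x => ⟨0, x, by simp⟩
    | succ n ih =>
      intro x
      obtain ⟨p, y, rfl⟩ := ih x
      obtain ⟨q, hq⟩ := hf (Submodule.Quotient.mk y)
      obtain ⟨z, hz⟩ : y - f q ∈ range (lsmul R N r) :=
        (Submodule.Quotient.eq _).mp hq.symm
      refine ⟨p + r ^ n • q, z, ?_⟩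
      rw [lsmul_apply] at hz
      rw [map_add, map_smul, pow_succ, mul_smul, hz]
      module
  obtain ⟨n, hn⟩ := hr
  intro x
  obtain ⟨p, y, rfl⟩ := key n x
  exact ⟨p, by rw [hn, zero_smul, add_zero]⟩

theorem Module.Flat.exact_lsmul [CommRing R] [AddCommGroup N] [Module R N] [Module.Flat R N]
    {a b : R} (h : Function.Exact (LinearMap.lsmul R R a) (LinearMap.lsmul R R b)) :
    Function.Exact (LinearMap.lsmul R N a) (LinearMap.lsmul R N b) := by
  have ladder : ∀ c : R, LinearMap.lsmul R N c ∘ₗ (TensorProduct.rid R N).toLinearMap =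
      (TensorProduct.rid R N).toLinearMap ∘ₗ (LinearMap.lsmul R R c).lTensor N := fun c =>
    TensorProduct.ext' fun x d => by simp [smul_smul, mul_comm]
  exact (Module.Flat.lTensor_exact N h).of_ladder_linearEquiv_of_exact (ladder a) (ladder b)

theorem Finsupp.exists_eq_smul_of_forall_dvd {ι : Type*} [SemigroupWithZero R] {r : R}
    (g : ι →₀ R) (hg : ∀ i, r ∣ g i) : ∃ h : ι →₀ R, g = r • h := by
  choose f hf using hg
  classical
  refine ⟨Finsupp.ofSupportFinite (fun i => if g i = 0 then 0 else f i) ?_, ?_⟩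
  · exact g.hasFiniteSupport.subset fun i hi h0 => hi (if_pos h0)
  · ext i
    by_cases h0 : g i = 0
    · rw [Finsupp.smul_apply, Finsupp.ofSupportFinite_coe, if_pos h0, smul_zero, h0]
    · rw [Finsupp.smul_apply, Finsupp.ofSupportFinite_coe, if_neg h0, smul_eq_mul, ← hf i]

end

namespace A3

theorem tA3_isNilpotent : IsNilpotent (tA3 k) := ⟨3, tA3_cube k⟩

theorem exact_lsmul_tA3_pow {i j : ℕ} (hij : i + j = 3) :
    Function.Exact (LinearMap.lsmul (A3 k) (A3 k) (tA3 k ^ i))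
      (LinearMap.lsmul (A3 k) (A3 k) (tA3 k ^ j)) := by
  have hpow : ∀ n, tA3 k ^ n = Ideal.Quotient.mk _ ((X : k[X]) ^ n) := fun n => by
    rw [tA3, map_pow]
  intro a
  simp only [LinearMap.lsmul_apply, smul_eq_mul, Set.mem_range]
  constructor
  · intro h
    obtain ⟨p, rfl⟩ := Ideal.Quotient.mk_surjective a
    rw [hpow, ← map_mul, Ideal.Quotient.eq_zero_iff_mem, Ideal.mem_span_singleton, ← hij,
      pow_add, mul_comm (X ^ i), mul_dvd_mul_iff_left (pow_ne_zero _ X_ne_zero)] at h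
    obtain ⟨q, rfl⟩ := h
    exact ⟨Ideal.Quotient.mk _ q, by rw [hpow, map_mul]⟩
  · rintro ⟨b, rfl⟩
    rw [← mul_assoc, ← pow_add, add_comm, hij, tA3_cube, zero_mul]

def constantCoeff : A3 k →ₐ[k] k :=
  Ideal.Quotient.liftₐ _ (Polynomial.aeval 0) fun p hp => by
    obtain ⟨q, rfl⟩ := Ideal.mem_span_singleton'.mp hp
    simp

theorem tA3_dvd_sub_constantCoeff (a : A3 k) :
    tA3 k ∣ a - algebraMap k (A3 k) (constantCoeff k a) := by
  obtain ⟨p, rfl⟩ := Ideal.Quotient.mk_surjective a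
  have h := map_dvd (Ideal.Quotient.mk (Ideal.span {(X : k[X]) ^ 3})) (X_dvd_sub_C (p := p))
  rwa [map_sub, coeff_zero_eq_aeval_zero] at h

end A3

theorem mulTmap_mk (x : tSub k M) :
    (mulTmap k M (Submodule.Quotient.mk x) : M) = tA3 k • (x : M) := rfl

theorem mulT2map_mk (x : M) :
    (mulT2map k M (Submodule.Quotient.mk x) : M) = tA3 k ^ 2 • x := rfl

theorem mulTmap_surjective : Function.Surjective (mulTmap k M) := by
  rintro ⟨_, y, rfl⟩
  refine ⟨Submodule.Quotient.mk ⟨tA3 k • y, y, rfl⟩, Subtype.ext ?_⟩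
  show tA3 k • tA3 k • y = tA3 k ^ 2 • y
  rw [smul_smul, sq]

theorem mulT2map_surjective : Function.Surjective (mulT2map k M) := by
  rintro ⟨_, y, rfl⟩
  exact ⟨Submodule.Quotient.mk y, rfl⟩

theorem mulTmap_injective_iff : Function.Injective (mulTmap k M) ↔
    ∀ x ∈ tSub k M, tA3 k • x = 0 → x ∈ t2Sub k M := by
  rw [← LinearMap.ker_eq_bot, LinearMap.ker_eq_bot', (Submodule.Quotient.mk_surjective _).forall]
  simp only [Submodule.Quotient.mk_eq_zero, Submodule.mem_comap, Subtype.forall,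
    ← Subtype.val_inj, mulTmap_mk, Submodule.coe_zero, Submodule.subtype_apply]

theorem mulT2map_injective_iff : Function.Injective (mulT2map k M) ↔
    ∀ x : M, tA3 k ^ 2 • x = 0 → x ∈ tSub k M := by
  rw [← LinearMap.ker_eq_bot, LinearMap.ker_eq_bot', (Submodule.Quotient.mk_surjective _).forall]
  simp only [Submodule.Quotient.mk_eq_zero, ← Subtype.val_inj, mulT2map_mk, Submodule.coe_zero]

theorem mulTmap_injective_of_flat [Module.Flat (A3 k) M] : Function.Injective (mulTmap k M) := by
  have h := Module.Flat.exact_lsmul (N := M) (A3.exact_lsmul_tA3_pow k (i := 2) (j := 1) rfl)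
  rw [pow_one] at h
  exact (mulTmap_injective_iff k M).mpr fun x _ hx => (h x).mp hx

theorem mulT2map_injective_of_flat [Module.Flat (A3 k) M] : Function.Injective (mulT2map k M) := by
  have h := Module.Flat.exact_lsmul (N := M) (A3.exact_lsmul_tA3_pow k (i := 1) (j := 2) rfl)
  rw [pow_one] at h
  exact (mulT2map_injective_iff k M).mpr fun x hx => (h x).mp hx

theorem exact_of_injective (h₁ : Function.Injective (mulTmap k M))
    (h₂ : Function.Injective (mulT2map k M)) :
    Function.Exact (LinearMap.lsmul (A3 k) M (tA3 k ^ 2)) (LinearMap.lsmul (A3 k) M (tA3 k)) := by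
  intro x
  rw [LinearMap.lsmul_apply]
  constructor
  · intro hx
    have hxt : x ∈ tSub k M :=
      (mulT2map_injective_iff k M).mp h₂ x (by rw [sq, mul_smul, hx, smul_zero])
    exact (mulTmap_injective_iff k M).mp h₁ x hxt hx
  · rintro ⟨y, rfl⟩
    rw [LinearMap.lsmul_apply, smul_smul, ← pow_succ', tA3_cube]
    exact zero_smul (A3 k) y

section Lift

variable {k M} [Module k (M ⧸ tSub k M)] [IsScalarTower k (A3 k) (M ⧸ tSub k M)]
  {ι : Type*} {m : ι → M}

theorem smul_mk_eq_constantCoeff_smul (a : A3 k) (x : M) :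
    a • (Submodule.Quotient.mk x : M ⧸ tSub k M) =
      A3.constantCoeff k a • Submodule.Quotient.mk x := by
  obtain ⟨c, hc⟩ := A3.tA3_dvd_sub_constantCoeff k a
  have ht : tA3 k • (Submodule.Quotient.mk x : M ⧸ tSub k M) = 0 :=
    (Submodule.Quotient.mk_eq_zero _).mpr ⟨x, rfl⟩
  have ha : a = algebraMap k (A3 k) (A3.constantCoeff k a) + c * tA3 k := by
    rw [mul_comm, ← hc, add_sub_cancel]
  calc a • (Submodule.Quotient.mk x : M ⧸ tSub k M)
      = (algebraMap k (A3 k) (A3.constantCoeff k a) + c * tA3 k) • Submodule.Quotient.mk x :=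
        congrArg (· • _) ha
    _ = A3.constantCoeff k a • Submodule.Quotient.mk x := by
        rw [add_smul, mul_smul, ht, smul_zero, add_zero, algebraMap_smul]

theorem mkQ_linearCombination {b : ι → M ⧸ tSub k M} (hm : ∀ i, (tSub k M).mkQ (m i) = b i)
    (g : ι →₀ A3 k) :
    (tSub k M).mkQ (Finsupp.linearCombination (A3 k) m g) =
      Finsupp.linearCombination k b (g.mapRange (A3.constantCoeff k) (map_zero _)) := by
  rw [Finsupp.linearCombination_apply, Finsupp.linearCombination_apply,
    Finsupp.sum_mapRange_index fun i => zero_smul k (b i), map_finsuppSum]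
  refine Finsupp.sum_congr fun i _ => ?_
  rw [map_smul, ← hm, Submodule.mkQ_apply, smul_mk_eq_constantCoeff_smul]

theorem linearCombination_surjective (b : Module.Basis ι k (M ⧸ tSub k M))
    (hm : ∀ i, (tSub k M).mkQ (m i) = b i) :
    Function.Surjective (Finsupp.linearCombination (A3 k) m) := by
  apply LinearMap.surjective_of_surjective_mkQ_comp_of_isNilpotent (A3.tA3_isNilpotent k)
  change Function.Surjective ((tSub k M).mkQ ∘ₗ _)
  refine fun v => ⟨(b.repr v).mapRange (algebraMap k (A3 k)) (map_zero _), ?_⟩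
  rw [LinearMap.comp_apply]
  have hrepr : ((b.repr v).mapRange (algebraMap k (A3 k)) (map_zero _)).mapRange
      (A3.constantCoeff k) (map_zero _) = b.repr v :=
    Finsupp.ext fun i => (A3.constantCoeff k).commutes _
  rw [mkQ_linearCombination hm, hrepr, b.linearCombination_repr]

theorem dvd_of_linearCombination_mem_tSub {b : ι → M ⧸ tSub k M} (hb : LinearIndependent k b)
    (hm : ∀ i, (tSub k M).mkQ (m i) = b i) {g : ι →₀ A3 k}
    (hg : Finsupp.linearCombination (A3 k) m g ∈ tSub k M) (i : ι) : tA3 k ∣ g i := by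
  have hzero : g.mapRange (A3.constantCoeff k) (map_zero _) = 0 := by
    refine linearIndependent_iff.mp hb _ ?_
    rw [← mkQ_linearCombination hm, Submodule.mkQ_apply, Submodule.Quotient.mk_eq_zero]
    exact hg
  have hi := DFunLike.congr_fun hzero i
  rw [Finsupp.mapRange_apply, Finsupp.zero_apply] at hi
  simpa [hi] using A3.tA3_dvd_sub_constantCoeff k (g i)

theorem linearCombination_injective
    (h : Function.Exact (LinearMap.lsmul (A3 k) M (tA3 k ^ 2)) (LinearMap.lsmul (A3 k) M (tA3 k)))
    (b : Module.Basis ι k (M ⧸ tSub k M)) (hm : ∀ i, (tSub k M).mkQ (m i) = b i) :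
    Function.Injective (Finsupp.linearCombination (A3 k) m) := by
  rw [← LinearMap.ker_eq_bot]
  refine Submodule.eq_bot_of_forall_eq_smul_of_isNilpotent (A3.tA3_isNilpotent k) fun g hg => ?_
  rw [LinearMap.mem_ker] at hg
  obtain ⟨g₁, rfl⟩ := Finsupp.exists_eq_smul_of_forall_dvd g
    (dvd_of_linearCombination_mem_tSub b.linearIndependent hm (hg ▸ zero_mem _))
  rw [map_smul] at hg
  obtain ⟨y, hy⟩ := (h _).mp hg
  obtain ⟨z, rfl⟩ := linearCombination_surjective b hm y
  refine ⟨g₁ - tA3 k ^ 2 • z, ?_, ?_⟩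
  · rw [LinearMap.mem_ker, map_sub, map_smul, ← hy, LinearMap.lsmul_apply, sub_self]
  · rw [smul_sub, smul_smul (tA3 k) (tA3 k ^ 2) z, ← pow_succ', tA3_cube,
      zero_smul (A3 k) z, sub_zero]

end Lift

theorem free_of_exact
    (h : Function.Exact (LinearMap.lsmul (A3 k) M (tA3 k ^ 2)) (LinearMap.lsmul (A3 k) M (tA3 k))) :
    Module.Free (A3 k) M := by
  let _ := Module.compHom (M ⧸ tSub k M) (algebraMap k (A3 k))
  have : IsScalarTower k (A3 k) (M ⧸ tSub k M) := IsScalarTower.of_compHom k (A3 k) _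
  let b := Module.Basis.ofVectorSpace k (M ⧸ tSub k M)
  choose m hm using fun i => (tSub k M).mkQ_surjective (b i)
  exact Module.Free.of_equiv (LinearEquiv.ofBijective _
    ⟨linearCombination_injective h b hm, linearCombination_surjective b hm⟩)

/-- For `A = k[t]/(t³)`, an `A`-module `M` is flat iff the maps
`tM/t²M → t²M` (multiplication by `t`) and `M/tM → t²M` (multiplication by `t²`)
are both isomorphisms, iff `M` is free. -/
theorem flat_iff_A3 :
    (Module.Flat (A3 k) M ↔
      (Function.Bijective (mulTmap k M) ∧ Function.Bijective (mulT2map k M))) ∧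
    (Module.Flat (A3 k) M ↔ Module.Free (A3 k) M) := by
  have flat_bijective : Module.Flat (A3 k) M →
      Function.Bijective (mulTmap k M) ∧ Function.Bijective (mulT2map k M) := fun _ =>
    ⟨⟨mulTmap_injective_of_flat k M, mulTmap_surjective k M⟩,
      ⟨mulT2map_injective_of_flat k M, mulT2map_surjective k M⟩⟩
  have bijective_free : Function.Bijective (mulTmap k M) ∧ Function.Bijective (mulT2map k M) →
      Module.Free (A3 k) M := fun ⟨h₁, h₂⟩ =>
    free_of_exact k M (exact_of_injective k M h₁.1 h₂.1)
  have free_flat : Module.Free (A3 k) M → Module.Flat (A3 k) M := fun _ => inferInstance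
  exact ⟨⟨flat_bijective, free_flat ∘ bijective_free⟩,
    ⟨bijective_free ∘ flat_bijective, free_flat⟩⟩

end
end

section
/- Let a < b be real numbers and f, g : [a,b] → ℝ be twice continuously differentiable functions with f(a) = g(a), f(b) = g(b), f ≤ g on [a,b], and f concave (i.e. f'' ≤ 0 on [a,b]). Then ∫ₐᵇ f'(x)² dx ≤ ∫ₐᵇ g'(x)² dx. -/
open Set intervalIntegral

/-!
Put `h = g - f`, so that `h ≥ 0` and `h` vanishes at both endpoints. Integrating by parts,
`∫ f' h' = -∫ f'' h ≥ 0` by concavity, and then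
`g'² = f'² + 2 f' h' + h'² ≥ f'² + 2 f' h'` integrates to `∫ g'² ≥ ∫ f'²`.
-/

theorem integral_mul_deriv_nonneg_of_deriv_nonpos {a b : ℝ} (hab : a ≤ b) {u u' v v' : ℝ → ℝ}
    (hu : ∀ x ∈ Icc a b, HasDerivAt u (u' x) x) (hv : ∀ x ∈ Icc a b, HasDerivAt v (v' x) x)
    (hu' : IntervalIntegrable u' MeasureTheory.volume a b)
    (hv' : IntervalIntegrable v' MeasureTheory.volume a b)
    (hva : v a = 0) (hvb : v b = 0) (hv_nonneg : ∀ x ∈ Icc a b, 0 ≤ v x)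
    (hu'_nonpos : ∀ x ∈ Icc a b, u' x ≤ 0) :
    0 ≤ ∫ x in a..b, u x * v' x := by
  rw [← uIcc_of_le hab] at hu hv
  rw [integral_mul_deriv_eq_deriv_mul hu hv hu' hv', hva, hvb]
  simp only [mul_zero, sub_zero, zero_sub, ← integral_neg]
  exact integral_nonneg hab fun x hx =>
    neg_nonneg.2 (mul_nonpos_of_nonpos_of_nonneg (hu'_nonpos x hx) (hv_nonneg x hx))

theorem integral_sq_le_integral_sq_of_integral_mul_sub_nonneg {a b : ℝ} (hab : a ≤ b)
    {u v : ℝ → ℝ} (hu : ContinuousOn u (Icc a b)) (hv : ContinuousOn v (Icc a b))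
    (h : 0 ≤ ∫ x in a..b, u x * (v x - u x)) :
    ∫ x in a..b, u x ^ 2 ≤ ∫ x in a..b, v x ^ 2 := by
  rw [← uIcc_of_le hab] at hu hv
  have hu2 : IntervalIntegrable (fun x => u x ^ 2) MeasureTheory.volume a b :=
    (hu.pow 2).intervalIntegrable
  have hcross : IntervalIntegrable (fun x => 2 * (u x * (v x - u x))) MeasureTheory.volume a b :=
    ((hu.mul (hv.sub hu)).const_mul 2).intervalIntegrable
  calc ∫ x in a..b, u x ^ 2
      ≤ (∫ x in a..b, u x ^ 2) + 2 * ∫ x in a..b, u x * (v x - u x) := by linarith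
    _ = ∫ x in a..b, (u x ^ 2 + 2 * (u x * (v x - u x))) := by
        rw [integral_add hu2 hcross, integral_const_mul]
    _ ≤ ∫ x in a..b, v x ^ 2 :=
        integral_mono_on hab (hu2.add hcross) (hv.pow 2).intervalIntegrable
          fun x _ => by nlinarith [sq_nonneg (v x - u x)]

theorem integral_sq_deriv_le_general (a b : ℝ) (hab : a < b)
    (f g f' g' f'' g'' : ℝ → ℝ)
    (hf : ∀ x ∈ Icc a b, HasDerivAt f (f' x) x)
    (hf' : ∀ x ∈ Icc a b, HasDerivAt f' (f'' x) x)
    (hg : ∀ x ∈ Icc a b, HasDerivAt g (g' x) x)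
    (hg' : ∀ x ∈ Icc a b, HasDerivAt g' (g'' x) x)
    (hf''c : ContinuousOn f'' (Icc a b))
    (ha : f a = g a) (hb : f b = g b)
    (hle : ∀ x ∈ Icc a b, f x ≤ g x)
    (hconc : ∀ x ∈ Icc a b, f'' x ≤ 0) :
    ∫ x in a..b, (f' x) ^ 2 ≤ ∫ x in a..b, (g' x) ^ 2 := by
  have hf'c : ContinuousOn f' (Icc a b) := fun x hx => (hf' x hx).continuousAt.continuousWithinAt
  have hg'c : ContinuousOn g' (Icc a b) := fun x hx => (hg' x hx).continuousAt.continuousWithinAt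
  have hcross : 0 ≤ ∫ x in a..b, f' x * (g' x - f' x) :=
    integral_mul_deriv_nonneg_of_deriv_nonpos hab.le hf' (fun x hx => (hg x hx).sub (hf x hx))
      ((hf''c.mono (uIcc_of_le hab.le).subset).intervalIntegrable)
      (((hg'c.sub hf'c).mono (uIcc_of_le hab.le).subset).intervalIntegrable)
      (sub_eq_zero.2 ha.symm) (sub_eq_zero.2 hb.symm) (fun x hx => sub_nonneg.2 (hle x hx)) hconc
  exact integral_sq_le_integral_sq_of_integral_mul_sub_nonneg hab.le hf'c hg'c hcross

/-- If `f, g` are C² on `[a,b]`, agree at the endpoints, `f ≤ g` on `[a,b]` and `f` is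
concave (`f'' ≤ 0`), then `∫ₐᵇ f'² ≤ ∫ₐᵇ g'²`. -/
theorem integral_sq_deriv_le (a b : ℝ) (hab : a < b)
    (f g f' g' f'' g'' : ℝ → ℝ)
    (hf : ∀ x ∈ Icc a b, HasDerivAt f (f' x) x)
    (hf' : ∀ x ∈ Icc a b, HasDerivAt f' (f'' x) x)
    (hg : ∀ x ∈ Icc a b, HasDerivAt g (g' x) x)
    (hg' : ∀ x ∈ Icc a b, HasDerivAt g' (g'' x) x)
    (hf''c : ContinuousOn f'' (Icc a b))
    (hg''c : ContinuousOn g'' (Icc a b))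
    (ha : f a = g a) (hb : f b = g b)
    (hle : ∀ x ∈ Icc a b, f x ≤ g x)
    (hconc : ∀ x ∈ Icc a b, f'' x ≤ 0) :
    ∫ x in a..b, (f' x) ^ 2 ≤ ∫ x in a..b, (g' x) ^ 2 :=
  integral_sq_deriv_le_general a b hab f g f' g' f'' g'' hf hf' hg hg' hf''c ha hb hle hconc
end

section
/- Let E be a module over a ring R, and let M ≤ N and M' ≤ N' be submodules of E. Set Q = M ⊔ (M' ⊓ N) and Q' = M' ⊔ (M ⊓ N'). Then Q ⊓ Q' = (M ⊓ N') ⊔ (M' ⊓ N). -/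
section ModularLattice

variable {α : Type*} [Lattice α] [IsModularLattice α] {a b c d : α}

theorem inf_sup_inf_eq_inf_of_le (h : b ≤ d) : a ⊓ (b ⊔ a ⊓ d) = a ⊓ d := by
  rw [sup_comm, inf_comm, sup_inf_assoc_of_le b inf_le_left, inf_comm b]
  exact sup_eq_left.2 (inf_le_inf_left a h)

theorem sup_inf_inf_sup_inf_eq_of_le (h : b ≤ d) :
    (a ⊔ b ⊓ c) ⊓ (b ⊔ a ⊓ d) = a ⊓ d ⊔ b ⊓ c := by
  have hbc : b ⊓ c ≤ b ⊔ a ⊓ d := le_sup_of_le_left inf_le_left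
  rw [sup_comm a, sup_inf_assoc_of_le a hbc, inf_sup_inf_eq_inf_of_le h, sup_comm]

end ModularLattice

theorem Q_inf_Q'_eq_general (R : Type*) [Ring R] (E : Type*) [AddCommGroup E]
    [Module R E] (M N M' N' : Submodule R E) (hM'N' : M' ≤ N') :
    (M ⊔ (M' ⊓ N)) ⊓ (M' ⊔ (M ⊓ N')) = (M ⊓ N') ⊔ (M' ⊓ N) :=
  sup_inf_inf_sup_inf_eq_of_le hM'N'

/-- For submodules `M ≤ N` and `M' ≤ N'` of a module `E`, setting
`Q = M ⊔ (M' ⊓ N)` and `Q' = M' ⊔ (M ⊓ N')`, one has `Q ⊓ Q' = (M ⊓ N') ⊔ (M' ⊓ N)`. -/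
theorem Q_inf_Q'_eq (R : Type*) [Ring R] (E : Type*) [AddCommGroup E]
    [Module R E] (M N M' N' : Submodule R E) (hMN : M ≤ N) (hM'N' : M' ≤ N') :
    (M ⊔ (M' ⊓ N)) ⊓ (M' ⊔ (M ⊓ N')) = (M ⊓ N') ⊔ (M' ⊓ N) :=
  Q_inf_Q'_eq_general R E M N M' N' hM'N'
end

section
/- Let 𝒜 be an abelian category with enough projectives, E an object of 𝒜, and σ ∈ Ext¹(E, E) a class with associated extension 0 → E → E_σ → E → 0. Then there exists a class α ∈ Ext¹(E, E_σ) whose image under the map Ext¹(E, E_σ) → Ext¹(E, E) (induced by the projection E_σ → E) equals σ if and only if the Yoneda square σ · σ = 0 in Ext²(E, E). -/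
open CategoryTheory CategoryTheory.Abelian

universe w v u

namespace CategoryTheory.ShortComplex.ShortExact

variable {C : Type u} [Category.{v} C] [Abelian C] [HasExt.{w} C]
  {S : ShortComplex C} (hS : S.ShortExact)

theorem exists_comp_mk₀_g_eq_iff_comp_extClass_eq_zero {X : C} {n : ℕ} (x : Ext X S.X₃ n) :
    (∃ y : Ext X S.X₂ n, y.comp (Ext.mk₀ S.g) (add_zero n) = x) ↔
      x.comp hS.extClass rfl = 0 := by
  constructor
  · rintro ⟨y, rfl⟩
    rw [Ext.comp_assoc_of_second_deg_zero, hS.comp_extClass, Ext.comp_zero]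
  · exact Ext.covariant_sequence_exact₃ X hS x rfl

end CategoryTheory.ShortComplex.ShortExact

theorem ext_lift_iff_yoneda_square_zero_general {C : Type u} [Category.{v} C] [Abelian C]
    [HasExt.{w} C] {E Eσ : C}
    (i : E ⟶ Eσ) (p : Eσ ⟶ E) (wS : i ≫ p = 0)
    (hS : (CategoryTheory.ShortComplex.mk i p wS).ShortExact)
    (σ : Ext E E 1) (hσ : hS.extClass = σ) :
    (∃ α : Ext E Eσ 1, α.comp (Ext.mk₀ p) (add_zero 1) = σ) ↔
      σ.comp σ rfl = (0 : Ext E E 2) := by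
  subst hσ
  exact hS.exists_comp_mk₀_g_eq_iff_comp_extClass_eq_zero hS.extClass

/-- For a class `σ ∈ Ext¹(E,E)` with associated extension `0 → E → E_σ → E → 0`, there is a
class `α ∈ Ext¹(E, E_σ)` mapping to `σ` under the map induced by the projection `E_σ → E`
iff the Yoneda square `σ·σ` vanishes in `Ext²(E,E)`. -/
theorem ext_lift_iff_yoneda_square_zero {C : Type u} [Category.{v} C] [Abelian C]
    [EnoughProjectives C] [HasExt.{w} C] {E Eσ : C}
    (i : E ⟶ Eσ) (p : Eσ ⟶ E) (wS : i ≫ p = 0)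
    (hS : (CategoryTheory.ShortComplex.mk i p wS).ShortExact)
    (σ : Ext E E 1) (hσ : hS.extClass = σ) :
    (∃ α : Ext E Eσ 1, α.comp (Ext.mk₀ p) (add_zero 1) = σ) ↔
      σ.comp σ rfl = (0 : Ext E E 2) :=
  ext_lift_iff_yoneda_square_zero_general i p wS hS σ hσ
end
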